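/- (Proposition 2, extinction branch.) Let κ ≥ θ ≥ 2 be integers, λ ≥ 0 a real, and p ∈ (0,1]. Let ρ : [0,∞) → (0,1] be differentiable with ρ(0) = p, satisfying the mean-field equation ρ'(t) = −ρ(t) + λ·(1−ρ(t))·Bin(κ,ρ(t),θ) for all t ≥ 0. If λ < λ_c^MF(κ,θ) or p < p_c^MF(κ,θ,λ), then there exists C ∈ (0,∞) such that p·e^{−t} ≤ ρ(t) ≤ C·e^{−t} for all t ≥ 0. -/

import Mathlib

/-!
Write the equation as `ρ' = ρ · H(ρ)`. Since `H ≥ -1`, `ρ(t) eᵗ` is nondecreasing, which is the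
lower bound. Either hypothesis makes `H` negative on `(0, p]`, so `ρ` never rises above `p`; as `H`
is continuous there and tends to `-1` at `0⁺`, in fact `H ≤ -δ < 0` on `(0, p]`, whence
`ρ(t) ≤ p e^{-δt}`. Finally `H(x) ≤ -1 + K x` with `K = λ 2^κ`, so
`ρ' ≤ (-1 + K p e^{-δt}) ρ`, and the integrating factor `exp (t + (K p / δ) e^{-δt})` gives
`ρ(t) ≤ p e^{K p / δ} e^{-t}`.
-/

/-- Bin(κ,x,θ) = ∑_{i=θ}^{κ} (κ choose i) x^i (1−x)^{κ−i}. -/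
noncomputable def binTail (κ : ℕ) (x : ℝ) (θ : ℕ) : ℝ :=
  ∑ i ∈ Finset.Icc θ κ, (κ.choose i : ℝ) * x ^ i * (1 - x) ^ (κ - i)

/-- H(κ,θ,λ;x) = −1 + λ·((1−x)/x)·Bin(κ,x,θ). -/
noncomputable def Hmf (κ θ : ℕ) (lam x : ℝ) : ℝ :=
  -1 + lam * ((1 - x) / x) * binTail κ x θ

/-- λ_c^MF(κ,θ) = sup{λ ≥ 0 : sup_{x∈(0,1]} H(κ,θ,λ;x) < 0}. -/
noncomputable def lambdaMF (κ θ : ℕ) : ℝ :=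
  sSup {lam : ℝ | 0 ≤ lam ∧ sSup ((fun x => Hmf κ θ lam x) '' Set.Ioc 0 1) < 0}

/-- p_c^MF(κ,θ,λ) = inf{x ∈ (0,1] : H(κ,θ,λ;x) ≥ 0}. -/
noncomputable def pcMF (κ θ : ℕ) (lam : ℝ) : ℝ :=
  sInf {x ∈ Set.Ioc (0:ℝ) 1 | 0 ≤ Hmf κ θ lam x}



open Set Filter Topology Real

theorem le_mul_exp_sub_of_deriv_le_mul {f f' a A : ℝ → ℝ} {s : ℝ}
    (hf : ∀ t ∈ Ici s, HasDerivAt f (f' t) t) (hA : ∀ t ∈ Ici s, HasDerivAt A (a t) t)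
    (hle : ∀ t ∈ Ioi s, f' t ≤ a t * f t) {t : ℝ} (ht : s ≤ t) :
    f t ≤ f s * exp (A t - A s) := by
  have hg : ∀ t ∈ Ici s, HasDerivAt (fun t => f t * exp (-A t))
      ((f' t - a t * f t) * exp (-A t)) t := fun t ht =>
    ((hf t ht).mul (hA t ht).neg.exp).congr_deriv (by simp only [Pi.neg_apply]; ring)
  have hanti : AntitoneOn (fun t => f t * exp (-A t)) (Ici s) := by
    refine antitoneOn_of_deriv_nonpos (convex_Ici s)
      (fun t ht => (hg t ht).continuousAt.continuousWithinAt) (fun t ht => ?_) (fun t ht => ?_)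
    all_goals rw [interior_Ici] at ht
    · exact (hg t (mem_Ici.2 ht.le)).differentiableAt.differentiableWithinAt
    · rw [(hg t (mem_Ici.2 ht.le)).deriv]
      exact mul_nonpos_of_nonpos_of_nonneg (sub_nonpos.2 (hle t ht)) (exp_pos _).le
  calc f t = f t * exp (-A t) * exp (A t) := by rw [mul_assoc, ← exp_add]; simp
    _ ≤ f s * exp (-A s) * exp (A t) :=
      mul_le_mul_of_nonneg_right (hanti self_mem_Ici ht ht) (exp_pos _).le
    _ = f s * exp (A t - A s) := by rw [mul_assoc, ← exp_add, neg_add_eq_sub]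

theorem mul_exp_sub_le_of_mul_le_deriv {f f' a A : ℝ → ℝ} {s : ℝ}
    (hf : ∀ t ∈ Ici s, HasDerivAt f (f' t) t) (hA : ∀ t ∈ Ici s, HasDerivAt A (a t) t)
    (hle : ∀ t ∈ Ioi s, a t * f t ≤ f' t) {t : ℝ} (ht : s ≤ t) :
    f s * exp (A t - A s) ≤ f t := by
  have := le_mul_exp_sub_of_deriv_le_mul (f := -f) (fun t ht => (hf t ht).neg) hA
    (fun t ht => by simpa using hle t ht) ht
  simpa using this

theorem exists_pos_forall_le_neg_of_continuousOn_Ioc {h : ℝ → ℝ} {a b c : ℝ}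
    (hc : ContinuousOn h (Ioc a b)) (hneg : ∀ x ∈ Ioc a b, h x < 0) (hc0 : c < 0)
    (hle : ∀ᶠ x in 𝓝[>] a, h x ≤ c) : ∃ δ > 0, ∀ x ∈ Ioc a b, h x ≤ -δ := by
  obtain ⟨u, hau, hu⟩ := (mem_nhdsGT_iff_exists_Ioo_subset' (lt_add_one a)).1 hle
  rcases lt_or_ge b u with hbu | hub
  · exact ⟨-c, neg_pos.2 hc0, fun x hx => by simpa using hu ⟨hx.1, hx.2.trans_lt hbu⟩⟩
  obtain ⟨x₀, hx₀, hmax⟩ := isCompact_Icc.exists_isMaxOn (nonempty_Icc.2 hub)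
    (hc.mono (Icc_subset_Ioc_iff hub |>.2 ⟨hau, le_rfl⟩))
  refine ⟨min (-c) (-h x₀), lt_min (neg_pos.2 hc0) (neg_pos.2 (hneg x₀ ?_)), fun x hx => ?_⟩
  · exact ⟨hau.trans_le hx₀.1, hx₀.2⟩
  rcases lt_or_ge x u with hxu | hux
  · exact (hu ⟨hx.1, hxu⟩ : h x ≤ c).trans (le_neg.2 (min_le_left _ _))
  · exact (hmax ⟨hux, hx.2⟩ : h x ≤ h x₀).trans (le_neg.2 (min_le_right _ _))

section Autonomous

variable {h ρ : ℝ → ℝ}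

theorem mul_exp_neg_le_of_neg_one_le (hρ : ∀ t ∈ Ici 0, HasDerivAt ρ (ρ t * h (ρ t)) t)
    (hpos : ∀ t ∈ Ici 0, 0 < ρ t) (hh : ∀ t ∈ Ioi 0, -1 ≤ h (ρ t)) {t : ℝ} (ht : 0 ≤ t) :
    ρ 0 * exp (-t) ≤ ρ t := by
  have := mul_exp_sub_le_of_mul_le_deriv hρ (fun t _ => (hasDerivAt_id t).neg)
    (fun t ht => by nlinarith [hpos t (mem_Ici.2 (le_of_lt ht)), hh t ht]) ht
  simpa using this

theorem le_apply_zero_of_neg (hρ : ∀ t ∈ Ici 0, HasDerivAt ρ (ρ t * h (ρ t)) t)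
    (hpos : ∀ t ∈ Ici 0, 0 < ρ t) (hneg : ∀ x ∈ Ioc 0 (ρ 0), h x < 0) {t : ℝ} (ht : 0 ≤ t) :
    ρ t ≤ ρ 0 :=
  image_le_of_deriv_right_lt_deriv_boundary (B := fun _ => ρ 0) (B' := fun _ => 0)
    (fun x hx => (hρ x hx.1).continuousAt.continuousWithinAt)
    (fun x hx => (hρ x hx.1).hasDerivWithinAt) le_rfl (fun _ => hasDerivAt_const _ _)
    (fun x hx hx0 => mul_neg_of_pos_of_neg (hpos x hx.1)
      (hx0 ▸ hneg _ ⟨hpos 0 self_mem_Ici, le_rfl⟩)) ⟨ht, le_rfl⟩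

theorem mem_Ioc_apply_zero_of_le_neg {δ : ℝ}
    (hρ : ∀ t ∈ Ici 0, HasDerivAt ρ (ρ t * h (ρ t)) t) (hpos : ∀ t ∈ Ici 0, 0 < ρ t)
    (hδ0 : 0 < δ) (hδ : ∀ x ∈ Ioc 0 (ρ 0), h x ≤ -δ) {t : ℝ} (ht : 0 ≤ t) :
    ρ t ∈ Ioc 0 (ρ 0) :=
  ⟨hpos t ht, le_apply_zero_of_neg hρ hpos (fun x hx => (hδ x hx).trans_lt (by linarith)) ht⟩

theorem le_mul_exp_neg_mul_of_le_neg {δ : ℝ}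
    (hρ : ∀ t ∈ Ici 0, HasDerivAt ρ (ρ t * h (ρ t)) t) (hpos : ∀ t ∈ Ici 0, 0 < ρ t)
    (hδ0 : 0 < δ) (hδ : ∀ x ∈ Ioc 0 (ρ 0), h x ≤ -δ) {t : ℝ} (ht : 0 ≤ t) :
    ρ t ≤ ρ 0 * exp (-(δ * t)) := by
  have := le_mul_exp_sub_of_deriv_le_mul hρ (fun t _ => ((hasDerivAt_id t).const_mul δ).neg)
    (fun t ht => by
      have hm := mem_Ioc_apply_zero_of_le_neg hρ hpos hδ0 hδ (le_of_lt ht)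
      nlinarith [mul_le_mul_of_nonneg_left (hδ _ hm) hm.1.le]) ht
  simpa using this

theorem le_mul_exp_mul_exp_neg_of_le_neg_one_add {δ K : ℝ}
    (hρ : ∀ t ∈ Ici 0, HasDerivAt ρ (ρ t * h (ρ t)) t) (hpos : ∀ t ∈ Ici 0, 0 < ρ t)
    (hδ0 : 0 < δ) (hδ : ∀ x ∈ Ioc 0 (ρ 0), h x ≤ -δ) (hK0 : 0 ≤ K)
    (hK : ∀ x ∈ Ioc 0 (ρ 0), h x ≤ -1 + K * x) {t : ℝ} (ht : 0 ≤ t) :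
    ρ t ≤ ρ 0 * exp (K * ρ 0 / δ) * exp (-t) := by
  have hρ0 := hpos 0 self_mem_Ici
  set c := K * ρ 0 / δ
  have hA (t : ℝ) : HasDerivAt (fun t => -t - c * exp (-(δ * t)))
      (-1 + K * ρ 0 * exp (-(δ * t))) t :=
    ((hasDerivAt_id t).neg.sub (((hasDerivAt_id t).const_mul δ).neg.exp.const_mul c)).congr_deriv
      (by simp only [c, Pi.neg_apply, id]; field_simp; ring)
  have hle := le_mul_exp_sub_of_deriv_le_mul hρ (fun t _ => hA t) (fun t ht => by
    obtain ⟨hρt, hρt0⟩ := mem_Ioc_apply_zero_of_le_neg hρ hpos hδ0 hδ (le_of_lt ht)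
    have hdecay := le_mul_exp_neg_mul_of_le_neg hρ hpos hδ0 hδ (le_of_lt ht)
    calc ρ t * h (ρ t) ≤ ρ t * (-1 + K * ρ t) :=
          mul_le_mul_of_nonneg_left (hK _ ⟨hρt, hρt0⟩) hρt.le
      _ ≤ ρ t * (-1 + K * (ρ 0 * exp (-(δ * t)))) := by gcongr
      _ = (-1 + K * ρ 0 * exp (-(δ * t))) * ρ t := by ring) ht
  calc ρ t ≤ _ := hle
    _ ≤ ρ 0 * exp (c + -t) := by
      gcongr
      have : 0 ≤ c * exp (-(δ * t)) := by positivity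
      simp only [mul_zero, neg_zero, exp_zero, mul_one]
      linarith
    _ = ρ 0 * exp c * exp (-t) := by rw [exp_add, mul_assoc]

end Autonomous

theorem binTail_nonneg (κ θ : ℕ) {x : ℝ} (hx : x ∈ Icc (0 : ℝ) 1) : 0 ≤ binTail κ x θ :=
  Finset.sum_nonneg fun i _ => by
    have := hx.1
    have := sub_nonneg.2 hx.2
    positivity

theorem binTail_le_two_pow_mul_pow (κ θ : ℕ) {x : ℝ} (hx : x ∈ Icc (0 : ℝ) 1) :
    binTail κ x θ ≤ 2 ^ κ * x ^ θ :=
  calc binTail κ x θ ≤ ∑ i ∈ Finset.Icc θ κ, (κ.choose i : ℝ) * x ^ θ := by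
        refine Finset.sum_le_sum fun i hi => ?_
        rw [mul_assoc]
        gcongr
        calc x ^ i * (1 - x) ^ (κ - i) ≤ x ^ i :=
              mul_le_of_le_one_right (pow_nonneg hx.1 _)
                (pow_le_one₀ (sub_nonneg.2 hx.2) (sub_le_self 1 hx.1))
          _ ≤ x ^ θ := pow_le_pow_of_le_one hx.1 hx.2 (Finset.mem_Icc.1 hi).1
    _ ≤ ∑ i ∈ Finset.range (κ + 1), (κ.choose i : ℝ) * x ^ θ :=
        Finset.sum_le_sum_of_subset_of_nonneg
          (fun i hi => by simp only [Finset.mem_Icc, Finset.mem_range] at hi ⊢; omega)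
          (fun _ _ _ => by have := hx.1; positivity)
    _ = 2 ^ κ * x ^ θ := by
        rw [← Finset.sum_mul, ← Nat.cast_sum, Nat.sum_range_choose, Nat.cast_pow, Nat.cast_two]

theorem mul_Hmf (κ θ : ℕ) (lam : ℝ) {x : ℝ} (hx : x ≠ 0) :
    x * Hmf κ θ lam x = -x + lam * (1 - x) * binTail κ x θ := by
  unfold Hmf
  field_simp

theorem continuousOn_Hmf (κ θ : ℕ) (lam : ℝ) : ContinuousOn (Hmf κ θ lam) (Ioi 0) := by
  unfold Hmf
  refine continuousOn_const.add ((continuousOn_const.mul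
    ((continuousOn_const.sub continuousOn_id).div continuousOn_id fun x hx => ne_of_gt hx)).mul ?_)
  unfold binTail
  fun_prop

theorem Hmf_mono {κ θ : ℕ} {lam lam' x : ℝ} (hle : lam ≤ lam') (hx : x ∈ Ioc (0 : ℝ) 1) :
    Hmf κ θ lam x ≤ Hmf κ θ lam' x := by
  have h1x : 0 ≤ (1 - x) / x := div_nonneg (sub_nonneg.2 hx.2) hx.1.le
  have hB := binTail_nonneg κ θ (Ioc_subset_Icc_self hx)
  unfold Hmf
  gcongr

theorem neg_one_le_Hmf {κ θ : ℕ} {lam x : ℝ} (hlam : 0 ≤ lam) (hx : x ∈ Ioc (0 : ℝ) 1) :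
    -1 ≤ Hmf κ θ lam x := by
  simpa [Hmf] using Hmf_mono (κ := κ) (θ := θ) hlam hx

theorem Hmf_le_neg_one_add {κ θ : ℕ} {lam x : ℝ} (hθ : 2 ≤ θ) (hlam : 0 ≤ lam)
    (hx : x ∈ Ioc (0 : ℝ) 1) : Hmf κ θ lam x ≤ -1 + lam * 2 ^ κ * x := by
  have hx' := Ioc_subset_Icc_self hx
  have hB0 := binTail_nonneg κ θ hx'
  have hB : binTail κ x θ ≤ 2 ^ κ * x ^ 2 := (binTail_le_two_pow_mul_pow κ θ hx').trans
    (mul_le_mul_of_nonneg_left (pow_le_pow_of_le_one hx.1.le hx.2 hθ) (by positivity))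
  have h : (1 - x) / x * binTail κ x θ ≤ 2 ^ κ * x := by
    rw [div_mul_eq_mul_div, div_le_iff₀ hx.1]
    nlinarith [mul_nonneg hx.1.le hB0]
  unfold Hmf
  nlinarith [mul_le_mul_of_nonneg_left h hlam]

theorem Hmf_neg_of_lt_lambdaMF {κ θ : ℕ} {lam x : ℝ} (hlam : 0 ≤ lam) (h : lam < lambdaMF κ θ)
    (hx : x ∈ Ioc (0 : ℝ) 1) : Hmf κ θ lam x < 0 := by
  have hne : {lam : ℝ | 0 ≤ lam ∧ sSup ((fun x => Hmf κ θ lam x) '' Ioc 0 1) < 0}.Nonempty := by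
    by_contra hempty
    rw [not_nonempty_iff_eq_empty] at hempty
    rw [lambdaMF, hempty, Real.sSup_empty] at h
    linarith
  obtain ⟨lam', ⟨-, hsup⟩, hlt⟩ := exists_lt_of_lt_csSup hne h
  -- an unbounded image would have `sSup = 0`
  have hbdd : BddAbove ((fun x => Hmf κ θ lam' x) '' Ioc 0 1) := by
    by_contra hb
    rw [Real.sSup_of_not_bddAbove hb] at hsup
    exact lt_irrefl _ hsup
  calc Hmf κ θ lam x ≤ Hmf κ θ lam' x := Hmf_mono hlt.le hx
    _ ≤ sSup ((fun x => Hmf κ θ lam' x) '' Ioc 0 1) := le_csSup hbdd (mem_image_of_mem _ hx)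
    _ < 0 := hsup

theorem Hmf_neg_of_lt_pcMF {κ θ : ℕ} {lam p x : ℝ} (hp : p ≤ 1) (h : p < pcMF κ θ lam)
    (hx : x ∈ Ioc 0 p) : Hmf κ θ lam x < 0 := by
  by_contra! hx0
  have hbdd : BddBelow {x ∈ Ioc (0 : ℝ) 1 | 0 ≤ Hmf κ θ lam x} := ⟨0, fun y hy => hy.1.1.le⟩
  have : pcMF κ θ lam ≤ x := csInf_le hbdd ⟨⟨hx.1, hx.2.trans hp⟩, hx0⟩
  linarith [hx.2]

theorem eventually_Hmf_le {κ θ : ℕ} {lam : ℝ} (hθ : 2 ≤ θ) (hlam : 0 ≤ lam) :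
    ∀ᶠ x in 𝓝[>] 0, Hmf κ θ lam x ≤ -1 / 2 := by
  have hlim : Tendsto (fun x => -1 + lam * 2 ^ κ * x) (𝓝[>] 0) (𝓝 (-1)) :=
    (Continuous.tendsto' (by fun_prop) 0 (-1) (by simp)).mono_left nhdsWithin_le_nhds
  filter_upwards [hlim.eventually (eventually_le_nhds (by norm_num : (-1 : ℝ) < -1 / 2)),
    Ioc_mem_nhdsGT one_pos] with x hx hx1
  exact (Hmf_le_neg_one_add hθ hlam hx1).trans hx

theorem stmt5_general (κ θ : ℕ) (hθ : 2 ≤ θ) (lam : ℝ) (hlam : 0 ≤ lam)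
    (p : ℝ) (ρ : ℝ → ℝ)
    (hρmem : ∀ t, 0 ≤ t → ρ t ∈ Set.Ioc (0:ℝ) 1)
    (hρ0 : ρ 0 = p)
    (hderiv : ∀ t, 0 ≤ t →
      HasDerivAt ρ (-ρ t + lam * (1 - ρ t) * binTail κ (ρ t) θ) t)
    (hsub : lam < lambdaMF κ θ ∨ p < pcMF κ θ lam) :
    ∃ C : ℝ, 0 < C ∧ ∀ t, 0 ≤ t →
      p * Real.exp (-t) ≤ ρ t ∧ ρ t ≤ C * Real.exp (-t) := by
  subst hρ0
  have hρ : ∀ t ∈ Ici 0, HasDerivAt ρ (ρ t * Hmf κ θ lam (ρ t)) t := fun t ht => by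
    rw [mul_Hmf κ θ lam (hρmem t ht).1.ne']
    exact hderiv t ht
  have hpos : ∀ t ∈ Ici 0, 0 < ρ t := fun t ht => (hρmem t ht).1
  obtain ⟨hp0, hp1⟩ := hρmem 0 le_rfl
  have hle_one : ∀ x ∈ Ioc 0 (ρ 0), x ∈ Ioc (0 : ℝ) 1 := fun x hx => ⟨hx.1, hx.2.trans hp1⟩
  have hneg : ∀ x ∈ Ioc 0 (ρ 0), Hmf κ θ lam x < 0 := by
    rcases hsub with h | h
    · exact fun x hx => Hmf_neg_of_lt_lambdaMF hlam h (hle_one x hx)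
    · exact fun x hx => Hmf_neg_of_lt_pcMF hp1 h hx
  obtain ⟨δ, hδ0, hδ⟩ := exists_pos_forall_le_neg_of_continuousOn_Ioc
    ((continuousOn_Hmf κ θ lam).mono Ioc_subset_Ioi_self) hneg (by norm_num)
    (eventually_Hmf_le hθ hlam)
  refine ⟨ρ 0 * exp (lam * 2 ^ κ * ρ 0 / δ), by positivity, fun t ht => ⟨?_, ?_⟩⟩
  · exact mul_exp_neg_le_of_neg_one_le hρ hpos
      (fun t ht => neg_one_le_Hmf hlam (hρmem t (le_of_lt ht))) ht
  · exact le_mul_exp_mul_exp_neg_of_le_neg_one_add hρ hpos hδ0 hδ (by positivity)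
      (fun x hx => Hmf_le_neg_one_add hθ hlam (hle_one x hx)) ht

/-- Proposition 2, extinction branch. -/
theorem stmt5 (κ θ : ℕ) (hθ : 2 ≤ θ) (hκθ : θ ≤ κ) (lam : ℝ) (hlam : 0 ≤ lam)
    (p : ℝ) (hp : p ∈ Set.Ioc (0:ℝ) 1) (ρ : ℝ → ℝ)
    (hρmem : ∀ t, 0 ≤ t → ρ t ∈ Set.Ioc (0:ℝ) 1)
    (hρ0 : ρ 0 = p)
    (hderiv : ∀ t, 0 ≤ t →
      HasDerivAt ρ (-ρ t + lam * (1 - ρ t) * binTail κ (ρ t) θ) t)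
    (hsub : lam < lambdaMF κ θ ∨ p < pcMF κ θ lam) :
    ∃ C : ℝ, 0 < C ∧ ∀ t, 0 ≤ t →
      p * Real.exp (-t) ≤ ρ t ∧ ρ t ≤ C * Real.exp (-t) :=
  stmt5_general κ θ hθ lam hlam p ρ hρmem hρ0 hderiv hsub
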